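/- Let n ≥ 1 and let A ∈ ℝ^{n×n} be the adjacency matrix of a weight-balanced weighted digraph, i.e., ∑_{j=1}^n A_{ij} = ∑_{j=1}^n A_{ji} for every i. Let L be the Laplacian matrix of A, and assume the kernel of L is one-dimensional (the eigenvalue 0 of L has geometric multiplicity 1). Then every L-invariant anti-synchrony subspace Δ_𝒫 ⊆ ℝ^n is evenly tagged. -/

import Mathlib

/-!
The all-ones vector lies in the one-dimensional kernel of `L` but, `Δ` being anti-synchrony, not
in `Δ`; hence `ker L ∩ Δ = 0`, and `L` restricted to the `L`-invariant subspace `Δ` is injective,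
thus onto `Δ`. Weight balance makes the column sums of `L` vanish, so every vector of `Δ = L Δ`
has coordinate sum zero. The indicator of a class `P` on which `*` is undefined, and `1_P − 1_P*`
for `P* ≠ P`, lie in `Δ`; their coordinate sums are `#P > 0` and `#P − #P*`.
-/

/-- A tagged partition of `{1,…,n}` (modeled as `Fin n`): a partition into nonempty
classes together with a partial involution on the classes having at most one fixed point.
The partial involution is encoded by `star`, with `star P = none` meaning `*` is
undefined at `P` (in particular `star P = none` for any `P` that is not a class). -/
structure TaggedPartition (n : ℕ) where
  classes : Set (Set (Fin n))
  classes_nonempty : ∀ P ∈ classes, P.Nonempty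
  cover : ∀ i : Fin n, ∃ P ∈ classes, i ∈ P
  eq_of_inter : ∀ P ∈ classes, ∀ Q ∈ classes, (P ∩ Q).Nonempty → P = Q
  star : Set (Fin n) → Option (Set (Fin n))
  star_dom : ∀ P, star P ≠ none → P ∈ classes
  star_ran : ∀ P Q, star P = some Q → Q ∈ classes
  star_invol : ∀ P Q, star P = some Q → star Q = some P
  star_fixed : ∀ P Q, star P = some P → star Q = some Q → P = Q

/-- The polydiagonal subspace `Δ_tp ⊆ ℝⁿ` of a tagged partition:
`x_i = x_j` whenever `[i] = [j]`, and `x_i = -x_j` whenever `[i]* = [j]`. -/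
def TaggedPartition.polydiag {n : ℕ} (tp : TaggedPartition n) : Set (Fin n → ℝ) :=
  {x | (∀ P ∈ tp.classes, ∀ i ∈ P, ∀ j ∈ P, x i = x j) ∧
       (∀ P Q, tp.star P = some Q → ∀ i ∈ P, ∀ j ∈ Q, x i = - x j)}

/-- `Δ_tp` is a synchrony subspace: the partial involution is the empty function. -/
def TaggedPartition.IsSynchrony {n : ℕ} (tp : TaggedPartition n) : Prop :=
  ∀ P, tp.star P = none

/-- Fully tagged: the partial involution is defined on every class. -/
def TaggedPartition.FullyTagged {n : ℕ} (tp : TaggedPartition n) : Prop :=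
  ∀ P ∈ tp.classes, tp.star P ≠ none

/-- Evenly tagged: fully tagged and `#P = #P*` for every class `P`. -/
def TaggedPartition.EvenlyTagged {n : ℕ} (tp : TaggedPartition n) : Prop :=
  tp.FullyTagged ∧ ∀ P Q, tp.star P = some Q → P.ncard = Q.ncard

/-- The Laplacian matrix of a weighted adjacency matrix `A`:
`L_{ij} = (∑_k A_{ik}) δ_{ij} − A_{ij}`. -/
def lap {n : ℕ} (A : Matrix (Fin n) (Fin n) ℝ) : Matrix (Fin n) (Fin n) ℝ :=
  Matrix.of fun i j => (if i = j then ∑ k, A i k else 0) - A i j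

open Matrix Module

theorem Matrix.sum_mulVec_eq_zero {ι κ R : Type*} [Fintype ι] [Fintype κ] [CommSemiring R]
    {M : Matrix ι κ R} (hM : 1 ᵥ* M = 0) (y : κ → R) : ∑ i, (M *ᵥ y) i = 0 := by
  rw [← one_dotProduct, dotProduct_mulVec, hM, zero_dotProduct]

theorem Submodule.disjoint_of_finrank_eq_one {K V : Type*} [DivisionRing K] [AddCommGroup V]
    [Module K V] {U W : Submodule K V} (hU : finrank K U = 1) {v : V} (hvU : v ∈ U)
    (hvW : v ∉ W) : Disjoint U W := by
  have : FiniteDimensional K U := Module.finite_of_finrank_eq_succ hU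
  have hlt : U ⊓ W < U := inf_lt_left.mpr fun h => hvW (h hvU)
  have := Submodule.finrank_lt_finrank_of_lt hlt
  rw [disjoint_iff, ← Submodule.finrank_eq_zero]
  omega

theorem LinearMap.le_range_of_mapsTo_of_disjoint_ker {K V : Type*} [DivisionRing K]
    [AddCommGroup V] [Module K V] {f : V →ₗ[K] V} {W : Submodule K V} [FiniteDimensional K W]
    (hfW : ∀ x ∈ W, f x ∈ W) (hker : Disjoint (ker f) W) : W ≤ range f := by
  have hinj : Function.Injective (f.restrict hfW) := by
    rw [← LinearMap.ker_eq_bot, LinearMap.ker_restrict]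
    exact Submodule.disjoint_iff_comap_eq_bot.mp hker.symm
  intro x hx
  obtain ⟨y, hy⟩ := LinearMap.injective_iff_surjective.mp hinj ⟨x, hx⟩
  exact ⟨y, congrArg Subtype.val hy⟩

theorem lap_mulVec_one {n : ℕ} (A : Matrix (Fin n) (Fin n) ℝ) : lap A *ᵥ 1 = 0 := by
  ext i
  simp [lap, mulVec, dotProduct, Finset.sum_sub_distrib]

theorem one_vecMul_lap {n : ℕ} {A : Matrix (Fin n) (Fin n) ℝ}
    (hbal : ∀ i, ∑ j, A i j = ∑ j, A j i) : 1 ᵥ* lap A = 0 := by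
  ext j
  simp [lap, vecMul, dotProduct, Finset.sum_sub_distrib, hbal]

namespace TaggedPartition

variable {n : ℕ} (tp : TaggedPartition n)

def polydiagSubmodule : Submodule ℝ (Fin n → ℝ) where
  carrier := tp.polydiag
  add_mem' := by
    rintro x y ⟨hx₁, hx₂⟩ ⟨hy₁, hy₂⟩
    refine ⟨fun P hP i hi j hj => ?_, fun P Q hPQ i hi j hj => ?_⟩
    · simp only [Pi.add_apply, hx₁ P hP i hi j hj, hy₁ P hP i hi j hj]
    · simp only [Pi.add_apply, hx₂ P Q hPQ i hi j hj, hy₂ P Q hPQ i hi j hj, neg_add]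
  zero_mem' := ⟨fun _ _ _ _ _ _ => rfl, fun _ _ _ _ _ _ _ => neg_zero.symm⟩
  smul_mem' := by
    rintro c x ⟨hx₁, hx₂⟩
    refine ⟨fun P hP i hi j hj => ?_, fun P Q hPQ i hi j hj => ?_⟩
    · simp only [Pi.smul_apply, hx₁ P hP i hi j hj]
    · simp only [Pi.smul_apply, hx₂ P Q hPQ i hi j hj, smul_neg]

theorem one_notMem_polydiag (h : ¬ tp.IsSynchrony) : (1 : Fin n → ℝ) ∉ tp.polydiag := by
  rintro ⟨-, hstar⟩
  obtain ⟨P, hP⟩ := not_forall.mp h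
  obtain ⟨Q, hPQ⟩ := Option.ne_none_iff_exists'.mp hP
  obtain ⟨i, hi⟩ := tp.classes_nonempty P (tp.star_dom P hP)
  obtain ⟨j, hj⟩ := tp.classes_nonempty Q (tp.star_ran P Q hPQ)
  have := hstar P Q hPQ i hi j hj
  norm_num at this

noncomputable def classOf (i : Fin n) : Set (Fin n) := (tp.cover i).choose

theorem classOf_mem_classes (i : Fin n) : tp.classOf i ∈ tp.classes := (tp.cover i).choose_spec.1

theorem mem_classOf (i : Fin n) : i ∈ tp.classOf i := (tp.cover i).choose_spec.2

theorem classOf_eq_iff {P : Set (Fin n)} (hP : P ∈ tp.classes) {i : Fin n} :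
    tp.classOf i = P ↔ i ∈ P :=
  ⟨fun h => h ▸ tp.mem_classOf i,
    fun hi => tp.eq_of_inter _ (tp.classOf_mem_classes i) P hP ⟨i, tp.mem_classOf i, hi⟩⟩

theorem comp_classOf_mem_polydiag {c : Set (Fin n) → ℝ}
    (hc : ∀ P Q, tp.star P = some Q → c Q = -c P) : (fun i => c (tp.classOf i)) ∈ tp.polydiag := by
  refine ⟨fun P hP i hi j hj => ?_, fun P Q hPQ i hi j hj => ?_⟩
  · simp only [(tp.classOf_eq_iff hP).mpr hi, (tp.classOf_eq_iff hP).mpr hj]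
  · have hP := tp.star_dom P (by simp [hPQ])
    simp only [(tp.classOf_eq_iff hP).mpr hi, (tp.classOf_eq_iff (tp.star_ran P Q hPQ)).mpr hj,
      hc P Q hPQ, neg_neg]

theorem sum_ite_classOf_eq_ncard {P : Set (Fin n)} (hP : P ∈ tp.classes) :
    ∑ i, (if tp.classOf i = P then (1 : ℝ) else 0) = P.ncard := by
  rw [Finset.sum_boole, ← Set.ncard_coe_finset]
  congr
  ext
  simp [tp.classOf_eq_iff hP]

theorem indicator_mem_polydiag_of_star_eq_none {P : Set (Fin n)} (hP : tp.star P = none) :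
    (fun i => if tp.classOf i = P then (1 : ℝ) else 0) ∈ tp.polydiag := by
  refine tp.comp_classOf_mem_polydiag (c := fun R => if R = P then 1 else 0) ?_
  intro R S hRS
  have hRP : R ≠ P := by rintro rfl; simp [hP] at hRS
  have hSP : S ≠ P := by rintro rfl; simpa [hP] using tp.star_invol R S hRS
  simp [hRP, hSP]

theorem indicator_sub_indicator_star_mem_polydiag {P Q : Set (Fin n)} (hPQ : tp.star P = some Q)
    (hne : P ≠ Q) :
    (fun i => (if tp.classOf i = P then (1 : ℝ) else 0) - if tp.classOf i = Q then 1 else 0)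
      ∈ tp.polydiag := by
  refine tp.comp_classOf_mem_polydiag
    (c := fun R => (if R = P then 1 else 0) - if R = Q then 1 else 0) ?_
  intro R S hRS
  have hQP := tp.star_invol P Q hPQ
  by_cases hRP : R = P
  · subst hRP
    obtain rfl : S = Q := Option.some.inj (hRS.symm.trans hPQ)
    simp [hne, Ne.symm hne]
  by_cases hRQ : R = Q
  · subst hRQ
    obtain rfl : S = P := Option.some.inj (hRS.symm.trans hQP)
    simp [hne, Ne.symm hne]
  have hSR := tp.star_invol R S hRS
  have hSP : S ≠ P := by rintro rfl; exact hRQ (Option.some.inj (hSR.symm.trans hPQ))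
  have hSQ : S ≠ Q := by rintro rfl; exact hRP (Option.some.inj (hSR.symm.trans hQP))
  simp [hRP, hRQ, hSP, hSQ]

end TaggedPartition

theorem weightBalanced_antiSynchrony_evenlyTagged_general {n : ℕ}
    (A : Matrix (Fin n) (Fin n) ℝ)
    (hbal : ∀ i, ∑ j, A i j = ∑ j, A j i)
    (hker : Module.finrank ℝ (LinearMap.ker (lap A).mulVecLin) = 1)
    (tp : TaggedPartition n)
    (hinv : ∀ x ∈ tp.polydiag, (lap A).mulVec x ∈ tp.polydiag)
    (hanti : ¬ tp.IsSynchrony) :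
    tp.EvenlyTagged := by
  have hdisj : Disjoint (LinearMap.ker (lap A).mulVecLin) tp.polydiagSubmodule :=
    Submodule.disjoint_of_finrank_eq_one hker (v := 1) (lap_mulVec_one A)
      (tp.one_notMem_polydiag hanti)
  have hsum : ∀ x ∈ tp.polydiag, ∑ i, x i = 0 := by
    intro x hx
    obtain ⟨y, rfl⟩ := LinearMap.le_range_of_mapsTo_of_disjoint_ker hinv hdisj hx
    exact sum_mulVec_eq_zero (one_vecMul_lap hbal) y
  refine ⟨fun P hP hnone => ?_, fun P Q hPQ => ?_⟩
  · have h := hsum _ (tp.indicator_mem_polydiag_of_star_eq_none hnone)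
    rw [tp.sum_ite_classOf_eq_ncard hP, Nat.cast_eq_zero] at h
    exact ((Set.ncard_pos).mpr (tp.classes_nonempty P hP)).ne' h
  · by_cases hne : P = Q
    · rw [hne]
    have h := hsum _ (tp.indicator_sub_indicator_star_mem_polydiag hPQ hne)
    rw [Finset.sum_sub_distrib, tp.sum_ite_classOf_eq_ncard (tp.star_dom P (by simp [hPQ])),
      tp.sum_ite_classOf_eq_ncard (tp.star_ran P Q hPQ), sub_eq_zero] at h
    exact_mod_cast h

/-- Theorem 6.7. Let `A` be the adjacency matrix of a weight-balanced
weighted digraph (row sums equal column sums, vertex by vertex), let `L` be its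
Laplacian, and assume the kernel of `L` is one-dimensional. Then every `L`-invariant
anti-synchrony subspace is evenly tagged. -/
theorem weightBalanced_antiSynchrony_evenlyTagged {n : ℕ} (hn : 1 ≤ n)
    (A : Matrix (Fin n) (Fin n) ℝ)
    (hbal : ∀ i, ∑ j, A i j = ∑ j, A j i)
    (hker : Module.finrank ℝ (LinearMap.ker (lap A).mulVecLin) = 1)
    (tp : TaggedPartition n)
    (hinv : ∀ x ∈ tp.polydiag, (lap A).mulVec x ∈ tp.polydiag)
    (hanti : ¬ tp.IsSynchrony) :
    tp.EvenlyTagged :=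
  weightBalanced_antiSynchrony_evenlyTagged_general A hbal hker tp hinv hanti
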